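/- arXiv:1607.02688 — 5 statements merged into one kernel-verified Lean document; each statement's English description precedes it below -/
import Mathlib

section
/- Let δ¹ > δ² > ... > δⁿ be reals in (0,1) and θ₀ ∈ ℝⁿ with each θ₀ⁱ > 0 and ∑ᵢ θ₀ⁱ = 1. Define β_t := ∑ᵢ θ₀ⁱ (δⁱ)^t. Then the key cross-difference identity holds: β_{t+τ}·β_{t'+τ'} − β_{t+τ'}·β_{t'+τ} = ∑_{i<j} θ₀ⁱθ₀ʲ (δⁱδʲ)^{t+τ} ((δⁱ)^{t'−t} − (δʲ)^{t'−t})((δⁱ)^{τ'−τ} − (δʲ)^{τ'−τ}) for all t ≤ t' and τ ≤ τ'. -/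
/-!
Expanding the product of two sums gives a double sum over pairs `(i, j)` whose diagonal terms
cancel; pairing the term of `(i, j)` with that of `(j, i)` turns each summand into the factored
product `θⁱθʲ (δⁱδʲ)^(t+τ) ((δⁱ)^a − (δʲ)^a) ((δⁱ)^b − (δʲ)^b)`, where `a = t' − t`, `b = τ' − τ`.
-/

open Finset

theorem Finset.sum_eq_sum_filter_lt_add_swap {ι M : Type*} [Fintype ι] [LinearOrder ι]
    [AddCommMonoid M] (g : ι × ι → M) (hg : ∀ i, g (i, i) = 0) :
    ∑ p, g p = ∑ p with p.1 < p.2, (g p + g p.swap) := by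
  have hupper : ∑ p with ¬p.1 < p.2, g p = ∑ p with p.2 < p.1, g p := by
    refine (sum_subset (fun p hp => ?_) fun p hp hlt => ?_).symm
    · simp only [mem_filter, mem_univ, true_and, not_lt] at hp ⊢
      exact hp.le
    · simp only [mem_filter, mem_univ, true_and, not_lt] at hp hlt
      rw [show p = (p.1, p.1) from Prod.ext rfl (le_antisymm hp hlt), hg]
  have hswap : ∑ p with p.2 < p.1, g p = ∑ p : ι × ι with p.1 < p.2, g p.swap :=
    sum_equiv (Equiv.prodComm ι ι) (by simp) (by simp)
  rw [← sum_filter_add_sum_filter_not univ (fun p : ι × ι => p.1 < p.2), hupper, hswap,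
    sum_add_distrib]

theorem sum_mul_pow_mul_sub_sum_mul_pow_mul {ι R : Type*} [Fintype ι] [LinearOrder ι]
    [CommRing R] (θ δ : ι → R) (t a τ b : ℕ) :
    (∑ i, θ i * δ i ^ (t + τ)) * (∑ i, θ i * δ i ^ (t + a + (τ + b))) -
        (∑ i, θ i * δ i ^ (t + (τ + b))) * (∑ i, θ i * δ i ^ (t + a + τ)) =
      ∑ p : ι × ι with p.1 < p.2, θ p.1 * θ p.2 * (δ p.1 * δ p.2) ^ (t + τ) *
        (δ p.1 ^ a - δ p.2 ^ a) * (δ p.1 ^ b - δ p.2 ^ b) := by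
  rw [sum_mul_sum, sum_mul_sum, ← sum_sub_distrib]
  simp only [← sum_sub_distrib]
  rw [← Fintype.sum_prod_type', sum_eq_sum_filter_lt_add_swap _ fun i => by ring]
  refine sum_congr rfl fun p _ => ?_
  simp only [Prod.fst_swap, Prod.snd_swap]
  ring

theorem stmt_1_general (n : ℕ) (δ θ₀ : Fin n → ℝ)
    (β : ℕ → ℝ) (hβ : ∀ t, β t = ∑ i, θ₀ i * (δ i) ^ t) :
    ∀ t t' τ τ' : ℕ, t ≤ t' → τ ≤ τ' →
      β (t + τ) * β (t' + τ') - β (t + τ') * β (t' + τ) =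
        ∑ p ∈ Finset.univ.filter (fun p : Fin n × Fin n => p.1 < p.2),
          θ₀ p.1 * θ₀ p.2 * (δ p.1 * δ p.2) ^ (t + τ) *
            ((δ p.1) ^ (t' - t) - (δ p.2) ^ (t' - t)) *
            ((δ p.1) ^ (τ' - τ) - (δ p.2) ^ (τ' - τ)) := by
  intro t t' τ τ' ht hτ
  obtain ⟨a, rfl⟩ := Nat.exists_eq_add_of_le ht
  obtain ⟨b, rfl⟩ := Nat.exists_eq_add_of_le hτ
  simp only [hβ, Nat.add_sub_cancel_left]
  exact sum_mul_pow_mul_sub_sum_mul_pow_mul θ₀ δ t a τ b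

theorem stmt_1 (n : ℕ) (δ θ₀ : Fin n → ℝ)
    (hδ1 : ∀ i, 0 < δ i) (hδ2 : ∀ i, δ i < 1)
    (hδanti : ∀ i j : Fin n, i < j → δ j < δ i)
    (hθpos : ∀ i, 0 < θ₀ i) (hθsum : ∑ i, θ₀ i = 1)
    (β : ℕ → ℝ) (hβ : ∀ t, β t = ∑ i, θ₀ i * (δ i) ^ t) :
    ∀ t t' τ τ' : ℕ, t ≤ t' → τ ≤ τ' →
      β (t + τ) * β (t' + τ') - β (t + τ') * β (t' + τ) =
        ∑ p ∈ Finset.univ.filter (fun p : Fin n × Fin n => p.1 < p.2),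
          θ₀ p.1 * θ₀ p.2 * (δ p.1 * δ p.2) ^ (t + τ) *
            ((δ p.1) ^ (t' - t) - (δ p.2) ^ (t' - t)) *
            ((δ p.1) ^ (τ' - τ) - (δ p.2) ^ (τ' - τ)) :=
  stmt_1_general n δ θ₀ β hβ
end

section
/- Let δ¹ > ... > δⁿ be reals in (0,1) and θ₀ ∈ (0,1)ⁿ with ∑ᵢθ₀ⁱ = 1. Define μ_t := (∑ᵢ θ₀ⁱ(δⁱ)^{t+1})/(∑ᵢ θ₀ⁱ(δⁱ)^t). Then the sequence (μ_t) is strictly increasing in t and converges to δ¹ as t → ∞. -/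
/-!
Writing `S t = ∑ i, θ₀ i * δ i ^ t`, we have `μ t = S (t + 1) / S t`. By the Lagrange identity,
`S t * S (t + 2) - S (t + 1) ^ 2` is half of the double sum of the nonnegative terms
`θ₀ i θ₀ j δ_i^t δ_j^t (δ_i - δ_j)^2`, which is positive as soon as two `δ`'s differ; this is
exactly `μ t < μ (t + 1)`. For the limit, `S t / (δ¹)^t → θ₀¹` because every other ratio
`δⁱ / δ¹` is below `1`, so `μ t = δ¹ · (S (t + 1) / (δ¹)^(t+1)) / (S t / (δ¹)^t) → δ¹`.
-/

open Finset Filter Topology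

section WeightedPowerSum

variable {ι : Type*} [Fintype ι]

def weightedPowerSum (w x : ι → ℝ) (t : ℕ) : ℝ := ∑ i, w i * x i ^ t

variable (w x : ι → ℝ)

theorem two_mul_weightedPowerSum_mul_sub_sq (t : ℕ) :
    2 * (weightedPowerSum w x t * weightedPowerSum w x (t + 2) -
      weightedPowerSum w x (t + 1) ^ 2) =
    ∑ i, ∑ j, w i * w j * x i ^ t * x j ^ t * (x i - x j) ^ 2 := by
  have hsplit : 2 * (weightedPowerSum w x t * weightedPowerSum w x (t + 2) -
      weightedPowerSum w x (t + 1) ^ 2) =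
      weightedPowerSum w x t * weightedPowerSum w x (t + 2) +
      weightedPowerSum w x (t + 2) * weightedPowerSum w x t -
      2 * (weightedPowerSum w x (t + 1) * weightedPowerSum w x (t + 1)) := by ring
  rw [hsplit]
  simp only [weightedPowerSum, sum_mul_sum]
  simp only [mul_sum, ← sum_add_distrib, ← sum_sub_distrib]
  exact sum_congr rfl fun i _ => sum_congr rfl fun j _ => by ring

variable {w x}

theorem weightedPowerSum_pos (hw : ∀ i, 0 < w i) (hx : ∀ i, 0 < x i) [Nonempty ι] (t : ℕ) :
    0 < weightedPowerSum w x t :=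
  sum_pos (fun i _ => mul_pos (hw i) (pow_pos (hx i) t)) univ_nonempty

theorem sq_weightedPowerSum_succ_lt (hw : ∀ i, 0 < w i) (hx : ∀ i, 0 < x i) {i₀ i₁ : ι}
    (hne : x i₀ ≠ x i₁) (t : ℕ) :
    weightedPowerSum w x (t + 1) ^ 2 < weightedPowerSum w x t * weightedPowerSum w x (t + 2) := by
  have hterm : ∀ i j, 0 ≤ w i * w j * x i ^ t * x j ^ t * (x i - x j) ^ 2 := fun i j => by
    have := hw i; have := hw j; have := hx i; have := hx j
    positivity
  have hpos : 0 < ∑ i, ∑ j, w i * w j * x i ^ t * x j ^ t * (x i - x j) ^ 2 := by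
    refine sum_pos' (fun i _ => sum_nonneg fun j _ => hterm i j) ⟨i₀, mem_univ _, ?_⟩
    refine sum_pos' (fun j _ => hterm i₀ j) ⟨i₁, mem_univ _, ?_⟩
    have := hw i₀; have := hw i₁; have := hx i₀; have := hx i₁
    have : x i₀ - x i₁ ≠ 0 := sub_ne_zero.mpr hne
    positivity
  linarith [two_mul_weightedPowerSum_mul_sub_sq w x t]

theorem strictMono_weightedPowerSum_succ_div (hw : ∀ i, 0 < w i) (hx : ∀ i, 0 < x i)
    {i₀ i₁ : ι} (hne : x i₀ ≠ x i₁) :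
    StrictMono fun t => weightedPowerSum w x (t + 1) / weightedPowerSum w x t := by
  have : Nonempty ι := ⟨i₀⟩
  refine strictMono_nat_of_lt_succ fun t => ?_
  rw [div_lt_div_iff₀ (weightedPowerSum_pos hw hx t) (weightedPowerSum_pos hw hx (t + 1)),
    ← sq, mul_comm]
  exact sq_weightedPowerSum_succ_lt hw hx hne t

theorem tendsto_weightedPowerSum_div_pow {i₀ : ι} (hx₀ : x i₀ ≠ 0)
    (hlt : ∀ i, i ≠ i₀ → |x i| < |x i₀|) :
    Tendsto (fun t => weightedPowerSum w x t / x i₀ ^ t) atTop (𝓝 (w i₀)) := by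
  classical
  have hrewrite : (fun t => weightedPowerSum w x t / x i₀ ^ t) =
      fun t => ∑ i, w i * (x i / x i₀) ^ t := by
    funext t
    simp only [weightedPowerSum, sum_div, div_pow, mul_div_assoc]
  have hsum : (∑ i, if i = i₀ then w i₀ else 0) = w i₀ := by simp
  rw [hrewrite, ← hsum]
  refine tendsto_finsetSum _ fun i _ => ?_
  by_cases hi : i = i₀
  · subst hi
    simp [div_self hx₀]
  · rw [if_neg hi]
    have hratio : |x i / x i₀| < 1 := by
      rw [abs_div, div_lt_one (abs_pos.mpr hx₀)]
      exact hlt i hi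
    simpa using (tendsto_pow_atTop_nhds_zero_of_abs_lt_one hratio).const_mul (w i)

theorem tendsto_weightedPowerSum_succ_div {i₀ : ι} (hw₀ : w i₀ ≠ 0) (hx₀ : x i₀ ≠ 0)
    (hlt : ∀ i, i ≠ i₀ → |x i| < |x i₀|) :
    Tendsto (fun t => weightedPowerSum w x (t + 1) / weightedPowerSum w x t) atTop
      (𝓝 (x i₀)) := by
  have hlim := tendsto_weightedPowerSum_div_pow (w := w) hx₀ hlt
  have hquot := ((hlim.comp (tendsto_add_atTop_nat 1)).div hlim hw₀).const_mul (x i₀)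
  rw [div_self hw₀, mul_one] at hquot
  refine hquot.congr fun t => ?_
  have : x i₀ ^ t ≠ 0 := pow_ne_zero t hx₀
  simp only [Pi.div_apply, Function.comp_apply, pow_succ]
  field_simp

end WeightedPowerSum

theorem stmt_8 (n : ℕ) (hn : 2 ≤ n) (δ θ₀ : Fin n → ℝ)
    (hδ1 : ∀ i, 0 < δ i)
    (hδanti : ∀ i j : Fin n, i < j → δ j < δ i)
    (hθ0 : ∀ i, 0 < θ₀ i)
    (μ : ℕ → ℝ)
    (hμ : ∀ t, μ t = (∑ i, θ₀ i * (δ i) ^ (t + 1)) / (∑ i, θ₀ i * (δ i) ^ t)) :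
    StrictMono μ ∧ Tendsto μ atTop (nhds (δ ⟨0, by omega⟩)) := by
  have hμS : μ = fun t => weightedPowerSum θ₀ δ (t + 1) / weightedPowerSum θ₀ δ t := funext hμ
  have hfirst_lt : ∀ i : Fin n, i ≠ ⟨0, by omega⟩ → |δ i| < |δ ⟨0, by omega⟩| := fun i hi => by
    rw [abs_of_pos (hδ1 _), abs_of_pos (hδ1 _)]
    exact hδanti _ _ (Nat.pos_of_ne_zero fun h => hi (Fin.ext h))
  rw [hμS]
  exact ⟨strictMono_weightedPowerSum_succ_div hθ0 hδ1
      (hδanti ⟨0, by omega⟩ ⟨1, by omega⟩ (by simp [Fin.lt_def])).ne',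
    tendsto_weightedPowerSum_succ_div (hθ0 _).ne' (hδ1 _).ne' hfirst_lt⟩
end

section
/- Fix γ > 0, γ ≠ 1, η > 0, φ ∈ ℝ, and let u(c) = (γ/(1−γ))[(φ + (η/γ)c)^{1−γ} − 1]. Let θ ∈ (0,1)ⁿ with ∑ᵢθⁱ = 1, x > 0, and suppose each share sⁱ := aⁱ(θ)x + (γφ/η)(n·aⁱ(θ) − 1) satisfies φ + (η/γ)sⁱ > 0, where aⁱ(θ) = (θⁱ)^{1/γ}/∑ⱼ(θʲ)^{1/γ}. Then ∑ᵢ θⁱ u(sⁱ) = (γ/(1−γ))[(∑ᵢ(θⁱ)^{1/γ})^γ · (φn + (η/γ)x)^{1−γ} − 1]. -/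
/-!
At the sharing rule every agent's argument `φ + (η/γ) sⁱ` of the power utility is the fraction
`aⁱ` of the aggregate `M = φ n + (η/γ) x`. With `aⁱ ∝ (θⁱ)^{1/γ}` the weight `θⁱ` exactly turns
`(aⁱ)^{1-γ}` into `(θⁱ)^{1/γ} / S^{1-γ}` with `S = ∑ⱼ (θʲ)^{1/γ}`, so the weighted sum collapses to
`S^γ M^{1-γ}`, and the constants `-1` sum to `-1` because `∑ θⁱ = 1`.
-/

open Finset

theorem mul_rpow_one_div_rpow_one_sub {t γ : ℝ} (ht : 0 < t) (hγ : γ ≠ 0) :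
    t * (t ^ (1 / γ)) ^ (1 - γ) = t ^ (1 / γ) := by
  rw [← Real.rpow_mul ht.le, ← Real.rpow_one_add' ht.le]
  · congr 1
    field_simp
    ring
  · field_simp
    simpa using hγ

theorem sum_mul_rpow_normalized_rpow_mul {ι : Type*} [Fintype ι] [Nonempty ι] {γ M : ℝ}
    (hγ : γ ≠ 0) (hM : 0 ≤ M) (θ : ι → ℝ) (hθ : ∀ i, 0 < θ i) :
    ∑ i, θ i * (θ i ^ (1 / γ) / (∑ j, θ j ^ (1 / γ)) * M) ^ (1 - γ) =
      (∑ j, θ j ^ (1 / γ)) ^ γ * M ^ (1 - γ) := by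
  set S := ∑ j, θ j ^ (1 / γ)
  have hS : 0 < S := sum_pos (fun i _ => Real.rpow_pos_of_pos (hθ i) _) univ_nonempty
  have hterm : ∀ i, θ i * (θ i ^ (1 / γ) / S * M) ^ (1 - γ) =
      θ i ^ (1 / γ) * (M ^ (1 - γ) / S ^ (1 - γ)) := fun i => by
    have hpow := Real.rpow_nonneg (hθ i).le (1 / γ)
    rw [Real.mul_rpow (div_nonneg hpow hS.le) hM, Real.div_rpow hpow hS.le]
    linear_combination M ^ (1 - γ) / S ^ (1 - γ) * mul_rpow_one_div_rpow_one_sub (hθ i) hγ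
  have hS_pow : S ^ γ = S / S ^ (1 - γ) := by
    rw [Real.rpow_sub hS, Real.rpow_one, div_div_cancel₀ hS.ne']
  rw [sum_congr rfl fun i _ => hterm i, ← sum_mul, hS_pow]
  ring

theorem add_mul_linear_share {n γ η φ a x : ℝ} (hγ : γ ≠ 0) (hη : η ≠ 0) :
    φ + η / γ * (a * x + γ * φ / η * (n * a - 1)) = a * (φ * n + η / γ * x) := by
  field_simp
  ring

theorem stmt_10_general (n : ℕ) (γ η φ : ℝ) (hγ : 0 < γ) (hη : 0 < η)
    (u : ℝ → ℝ)
    (hu : ∀ c, u c = (γ / (1 - γ)) * ((φ + (η / γ) * c) ^ (1 - γ) - 1))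
    (θ : Fin n → ℝ) (hθ0 : ∀ i, 0 < θ i) (hθsum : ∑ i, θ i = 1)
    (x : ℝ)
    (a : Fin n → ℝ) (ha : ∀ i, a i = (θ i) ^ (1 / γ) / ∑ j, (θ j) ^ (1 / γ))
    (s : Fin n → ℝ) (hs : ∀ i, s i = a i * x + (γ * φ / η) * (n * a i - 1))
    (hspos : ∀ i, 0 < φ + (η / γ) * s i) :
    ∑ i, θ i * u (s i) =
      (γ / (1 - γ)) * ((∑ i, (θ i) ^ (1 / γ)) ^ γ * (φ * n + (η / γ) * x) ^ (1 - γ) - 1) := by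
  have : Nonempty (Fin n) := by
    by_contra h
    simp [not_nonempty_iff.mp h] at hθsum
  have hshare : ∀ i, φ + η / γ * s i = a i * (φ * n + η / γ * x) := fun i => by
    rw [hs, add_mul_linear_share hγ.ne' hη.ne']
  obtain ⟨i₀⟩ := ‹Nonempty (Fin n)›
  have hM : 0 ≤ φ * n + η / γ * x := by
    have ha₀ : 0 < a i₀ := by
      rw [ha]
      exact div_pos (Real.rpow_pos_of_pos (hθ0 i₀) _)
        (sum_pos (fun i _ => Real.rpow_pos_of_pos (hθ0 i) _) univ_nonempty)
    exact (pos_of_mul_pos_right (hshare i₀ ▸ hspos i₀) ha₀.le).le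
  calc ∑ i, θ i * u (s i)
      = γ / (1 - γ) * (∑ i, θ i * (a i * (φ * n + η / γ * x)) ^ (1 - γ) - ∑ i, θ i) := by
        simp only [hu, hshare, mul_sum, ← sum_sub_distrib]
        exact sum_congr rfl fun i _ => by ring
    _ = _ := by
        simp only [ha]
        rw [sum_mul_rpow_normalized_rpow_mul hγ.ne' hM θ hθ0, hθsum]

theorem stmt_10 (n : ℕ) (γ η φ : ℝ) (hγ : 0 < γ) (hγ1 : γ ≠ 1) (hη : 0 < η)
    (u : ℝ → ℝ)
    (hu : ∀ c, u c = (γ / (1 - γ)) * ((φ + (η / γ) * c) ^ (1 - γ) - 1))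
    (θ : Fin n → ℝ) (hθ0 : ∀ i, 0 < θ i) (hθ1 : ∀ i, θ i < 1) (hθsum : ∑ i, θ i = 1)
    (x : ℝ) (hx : 0 < x)
    (a : Fin n → ℝ) (ha : ∀ i, a i = (θ i) ^ (1 / γ) / ∑ j, (θ j) ^ (1 / γ))
    (s : Fin n → ℝ) (hs : ∀ i, s i = a i * x + (γ * φ / η) * (n * a i - 1))
    (hspos : ∀ i, 0 < φ + (η / γ) * s i) :
    ∑ i, θ i * u (s i) =
      (γ / (1 - γ)) * ((∑ i, (θ i) ^ (1 / γ)) ^ γ * (φ * n + (η / γ) * x) ^ (1 - γ) - 1) :=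
  stmt_10_general n γ η φ hγ hη u hu θ hθ0 hθsum x a ha s hs hspos
end

section
/- Let δ¹ > δ² be reals in (0,1), γ > 0, and θ₀¹, θ₀² > 0 with θ₀¹ + θ₀² = 1. Define β̂_t := (θ̂₀¹(δ̂¹)^t + θ̂₀²(δ̂²)^t)^γ where δ̂ⁱ = (δⁱ)^{1/γ} and θ̂₀ⁱ = (θ₀ⁱ)^{1/γ}/((θ₀¹)^{1/γ} + (θ₀²)^{1/γ}). Then the preferences represented by (b,t) ↦ β̂_t·U(b) (for any strictly positive U on payments) are nonstationary: there exist t < t' and τ < τ' such that β̂_{t+τ}/β̂_{t+τ'} ≠ β̂_{t'+τ}/β̂_{t'+τ'}. -/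
/-!
Write `m t = a x^t + b y^t` for the aggregate before the power `γ`. Its gap
`m t * m (t + 2) - m (t + 1) ^ 2 = a b x^t y^t (x - y)^2` is strictly positive when the two
discount factors differ, and raising to the power `γ > 0` preserves this strict log-convexity.
So `β t / β (t + 1) < β (t + 1) / β (t + 2)`: the relative discount of one period of delay
depends on the base date.
-/

open Real

lemma two_point_moment_sq_lt {a b x y : ℝ} (ha : 0 < a) (hb : 0 < b) (hx : 0 < x) (hy : 0 < y)
    (hxy : x ≠ y) (t : ℕ) :
    (a * x ^ (t + 1) + b * y ^ (t + 1)) ^ 2 <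
      (a * x ^ t + b * y ^ t) * (a * x ^ (t + 2) + b * y ^ (t + 2)) := by
  have hgap : (a * x ^ t + b * y ^ t) * (a * x ^ (t + 2) + b * y ^ (t + 2)) -
      (a * x ^ (t + 1) + b * y ^ (t + 1)) ^ 2 = a * b * x ^ t * y ^ t * (x - y) ^ 2 := by
    ring
  have : 0 < (x - y) ^ 2 := sq_pos_of_ne_zero (sub_ne_zero.mpr hxy)
  have : 0 < a * b * x ^ t * y ^ t * (x - y) ^ 2 := by positivity
  linarith

lemma rpow_sq_lt_rpow_mul {p q r γ : ℝ} (hp : 0 ≤ p) (hq : 0 ≤ q) (hr : 0 ≤ r) (hγ : 0 < γ)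
    (h : q ^ 2 < p * r) : (q ^ γ) ^ 2 < p ^ γ * r ^ γ := by
  calc (q ^ γ) ^ 2 = (q ^ 2) ^ γ := by
        rw [← rpow_natCast, ← rpow_natCast, ← rpow_mul hq, ← rpow_mul hq, mul_comm]
    _ < (p * r) ^ γ := rpow_lt_rpow (by positivity) h hγ
    _ = p ^ γ * r ^ γ := mul_rpow hp hr

theorem two_point_discount_ne {a b x y γ : ℝ} (ha : 0 < a) (hb : 0 < b) (hx : 0 < x) (hy : 0 < y)
    (hxy : x ≠ y) (hγ : 0 < γ) (β : ℕ → ℝ) (hβ : ∀ t, β t = (a * x ^ t + b * y ^ t) ^ γ)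
    (t : ℕ) : β t / β (t + 1) ≠ β (t + 1) / β (t + 2) := by
  have hpos : ∀ s, 0 < β s := fun s => hβ s ▸ rpow_pos_of_pos (by positivity) γ
  have hlt : β (t + 1) ^ 2 < β t * β (t + 2) := by
    simp only [hβ]
    exact rpow_sq_lt_rpow_mul (by positivity) (by positivity) (by positivity) hγ
      (two_point_moment_sq_lt ha hb hx hy hxy t)
  rw [Ne, div_eq_div_iff (hpos _).ne' (hpos _).ne']
  intro h
  nlinarith

theorem stmt_15_general (δ₁ δ₂ θ₁ θ₂ γ : ℝ)
    (hδ1 : 0 < δ₂) (hδ2 : δ₂ < δ₁) (hγ : 0 < γ)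
    (hθ1 : 0 < θ₁) (hθ2 : 0 < θ₂)
    (δh₁ δh₂ θh₁ θh₂ : ℝ)
    (hδh1 : δh₁ = δ₁ ^ (1 / γ)) (hδh2 : δh₂ = δ₂ ^ (1 / γ))
    (hθh1 : θh₁ = θ₁ ^ (1 / γ) / (θ₁ ^ (1 / γ) + θ₂ ^ (1 / γ)))
    (hθh2 : θh₂ = θ₂ ^ (1 / γ) / (θ₁ ^ (1 / γ) + θ₂ ^ (1 / γ)))
    (βhat : ℕ → ℝ)
    (hβhat : ∀ t, βhat t = (θh₁ * δh₁ ^ t + θh₂ * δh₂ ^ t) ^ γ) :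
    ∃ t t' τ τ' : ℕ, t < t' ∧ τ < τ' ∧
      βhat (t + τ) / βhat (t + τ') ≠ βhat (t' + τ) / βhat (t' + τ') := by
  refine ⟨0, 1, 0, 1, zero_lt_one, zero_lt_one, ?_⟩
  have hδh : δh₂ < δh₁ := hδh1 ▸ hδh2 ▸ rpow_lt_rpow hδ1.le hδ2 (by positivity)
  have hθh₁ : 0 < θh₁ := hθh1 ▸ by positivity
  have hθh₂ : 0 < θh₂ := hθh2 ▸ by positivity
  have hδh₂ : 0 < δh₂ := hδh2 ▸ rpow_pos_of_pos hδ1 _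
  simpa using two_point_discount_ne hθh₁ hθh₂ (hδh₂.trans hδh) hδh₂ hδh.ne' hγ βhat hβhat 0

theorem stmt_15 (δ₁ δ₂ θ₁ θ₂ γ : ℝ)
    (hδ1 : 0 < δ₂) (hδ2 : δ₂ < δ₁) (hδ3 : δ₁ < 1) (hγ : 0 < γ)
    (hθ1 : 0 < θ₁) (hθ2 : 0 < θ₂) (hθsum : θ₁ + θ₂ = 1)
    (δh₁ δh₂ θh₁ θh₂ : ℝ)
    (hδh1 : δh₁ = δ₁ ^ (1 / γ)) (hδh2 : δh₂ = δ₂ ^ (1 / γ))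
    (hθh1 : θh₁ = θ₁ ^ (1 / γ) / (θ₁ ^ (1 / γ) + θ₂ ^ (1 / γ)))
    (hθh2 : θh₂ = θ₂ ^ (1 / γ) / (θ₁ ^ (1 / γ) + θ₂ ^ (1 / γ)))
    (βhat : ℕ → ℝ)
    (hβhat : ∀ t, βhat t = (θh₁ * δh₁ ^ t + θh₂ * δh₂ ^ t) ^ γ) :
    ∃ t t' τ τ' : ℕ, t < t' ∧ τ < τ' ∧
      βhat (t + τ) / βhat (t + τ') ≠ βhat (t' + τ) / βhat (t' + τ') :=
  stmt_15_general δ₁ δ₂ θ₁ θ₂ γ hδ1 hδ2 hγ hθ1 hθ2 δh₁ δh₂ θh₁ θh₂ hδh1 hδh2 hθh1 hθh2 βhat hβhat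
end

section
/- Let δ¹ > ... > δⁿ be reals in (0,1), n ≥ 2, θ₀ ∈ (0,1)ⁿ with ∑ᵢθ₀ⁱ = 1, and β_t := ∑ᵢ θ₀ⁱ(δⁱ)^t. Then β is not an exponential sequence: there is no ρ ∈ (0,1) and C > 0 with β_t = C·ρ^t for all t ∈ ℕ. Equivalently, β_{t+1}/β_t is not constant in t. -/
open Finset

theorem stmt_17 (n : ℕ) (hn : 2 ≤ n) (δ θ₀ : Fin n → ℝ)
    (hδ1 : ∀ i, 0 < δ i) (hδ2 : ∀ i, δ i < 1)
    (hδanti : ∀ i j : Fin n, i < j → δ j < δ i)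
    (hθ0 : ∀ i, 0 < θ₀ i) (hθ1 : ∀ i, θ₀ i < 1) (hθsum : ∑ i, θ₀ i = 1)
    (β : ℕ → ℝ) (hβ : ∀ t, β t = ∑ i, θ₀ i * (δ i) ^ t) :
    (¬∃ (ρ C : ℝ), ρ ∈ Set.Ioo (0 : ℝ) 1 ∧ 0 < C ∧ ∀ t : ℕ, β t = C * ρ ^ t) ∧
    (∃ t t' : ℕ, β (t + 1) / β t ≠ β (t' + 1) / β t') := by
  have hpos : ∀ t, 0 < β t := by
    intro t
    rw [hβ]
    apply Finset.sum_pos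
    · intro i _
      exact mul_pos (hθ0 i) (pow_pos (hδ1 i) t)
    · exact Finset.univ_nonempty_iff.mpr ⟨⟨0, by omega⟩⟩
  -- key identity
  have e0 : β 0 = ∑ i, θ₀ i := by simp [hβ]
  have e1 : β 1 = ∑ i, θ₀ i * δ i := by simp [hβ]
  have e2 : β 2 = ∑ i, θ₀ i * δ i ^ 2 := by simp [hβ]
  have hA : β 0 * β 2 - β 1 * β 1
      = ∑ i, ∑ j, θ₀ i * θ₀ j * (δ j * (δ j - δ i)) := by
    rw [e0, e1, e2, Finset.sum_mul_sum, Finset.sum_mul_sum,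
      ← Finset.sum_sub_distrib]
    refine Finset.sum_congr rfl fun i _ => ?_
    rw [← Finset.sum_sub_distrib]
    refine Finset.sum_congr rfl fun j _ => by ring
  have hB : (∑ i, ∑ j, θ₀ i * θ₀ j * (δ j * (δ j - δ i)))
      = ∑ i, ∑ j, θ₀ i * θ₀ j * (δ i * (δ i - δ j)) := by
    rw [Finset.sum_comm]
    refine Finset.sum_congr rfl fun i _ => Finset.sum_congr rfl fun j _ => by ring
  have hkey : 2 * (β 0 * β 2 - β 1 * β 1)
      = ∑ i, ∑ j, θ₀ i * θ₀ j * (δ i - δ j) ^ 2 := by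
    rw [two_mul]
    nth_rewrite 1 [hA]
    nth_rewrite 1 [hA, hB]
    rw [← Finset.sum_add_distrib]
    refine Finset.sum_congr rfl fun i _ => ?_
    rw [← Finset.sum_add_distrib]
    refine Finset.sum_congr rfl fun j _ => by ring
  -- positivity of the double sum
  have i0 : Fin n := ⟨0, by omega⟩
  have i1 : Fin n := ⟨1, by omega⟩
  have hδne : δ ⟨0, by omega⟩ ≠ δ ⟨1, by omega⟩ := by
    have := hδanti ⟨0, by omega⟩ ⟨1, by omega⟩ (by simp [Fin.lt_def])
    linarith
  have hsumpos : 0 < ∑ i, ∑ j, θ₀ i * θ₀ j * (δ i - δ j) ^ 2 := by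
    have hterm : ∀ i : Fin n, ∀ j : Fin n,
        0 ≤ θ₀ i * θ₀ j * (δ i - δ j) ^ 2 := fun i j =>
      mul_nonneg (mul_nonneg (hθ0 i).le (hθ0 j).le) (sq_nonneg _)
    apply Finset.sum_pos'
    · intro i _
      exact Finset.sum_nonneg fun j _ => hterm i j
    · refine ⟨⟨0, by omega⟩, Finset.mem_univ _, ?_⟩
      apply Finset.sum_pos'
      · intro j _; exact hterm _ j
      · refine ⟨⟨1, by omega⟩, Finset.mem_univ _, ?_⟩
        apply mul_pos (mul_pos (hθ0 _) (hθ0 _))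
        exact pow_pos (sub_pos.mpr (lt_of_le_of_ne (by
          have := hδanti ⟨0, by omega⟩ ⟨1, by omega⟩ (by simp [Fin.lt_def])
          linarith) (Ne.symm hδne))) 2
  have hlt : β 1 * β 1 < β 0 * β 2 := by nlinarith [hkey, hsumpos]
  have hratio : β (0 + 1) / β 0 ≠ β (1 + 1) / β 1 := by
    simp only [zero_add]
    intro h
    rw [div_eq_div_iff (hpos 0).ne' (hpos 1).ne'] at h
    nlinarith [hlt]
  refine ⟨?_, 0, 1, hratio⟩
  rintro ⟨ρ, C, ⟨hρ0, hρ1⟩, hC, hall⟩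
  apply hratio
  have hCρ : ∀ t : ℕ, β (t + 1) / β t = ρ := by
    intro t
    rw [hall, hall, pow_succ]
    field_simp
  rw [hCρ 0, hCρ 1]
end
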